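/- Let R be a commutative ring and fix an integer a with 0 ≤ a ≤ w. Let Seg_a = {δ-monomials b : deg b = r and b_δ = r−a} and b*_a = (r−a)·e_δ + a·e_{δ+1}. Let P ∈ R[x_1,…,x_n] be supported in tar' and such that every element m of the support of P satisfies m_{δ+1} ≥ a. Then there exists a function Υ : Seg_a → R[x_1,…,x_n] such that Υ(b*_a) = P, Υ(b) is supported in tar' for every b ∈ Seg_a, and whenever b, b′ ∈ Seg_a and δ ≤ α, β ≤ n satisfy e_α + b = e_β + b′, one has X_α·Υ(b) = X_β·Υ(b′). -/

import Mathlib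

open MvPolynomial
open scoped Classical

noncomputable section

/-- Total degree of an exponent vector `m : Fin n →₀ ℕ`. -/
def mdeg {n : ℕ} (m : Fin n →₀ ℕ) : ℕ := ∑ k, m k

/-- `m` is a δ-monomial: all exponents of variables strictly before `δ` vanish. -/
def IsDeltaMon {n : ℕ} (δ : Fin n) (m : Fin n →₀ ℕ) : Prop := ∀ k < δ, m k = 0

/-- `m` is a (δ+1)-monomial: all exponents of variables up to and including `δ` vanish. -/
def IsSuccDeltaMon {n : ℕ} (δ : Fin n) (m : Fin n →₀ ℕ) : Prop := ∀ k ≤ δ, m k = 0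

/-- The order ideal `O(n,r,s,δ,w)`. -/
def OIdeal {n : ℕ} (r s w : ℕ) (δ : Fin n) : Set (Fin n →₀ ℕ) :=
  {m | mdeg m < r ∨ (IsDeltaMon δ m ∧ r ≤ mdeg m ∧ mdeg m ≤ s ∧ m δ + w + 1 ≤ r)}

/-- The border `∂O`. -/
def Border {n : ℕ} (r s w : ℕ) (δ : Fin n) : Set (Fin n →₀ ℕ) :=
  {m | m ∉ OIdeal r s w δ ∧
    ∃ (α : Fin n) (t : Fin n →₀ ℕ), t ∈ OIdeal r s w δ ∧ m = Finsupp.single α 1 + t}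

/-- The set `S_D` of "diagonal" border monomials. -/
def SD {n : ℕ} (r s w : ℕ) (δ : Fin n) : Set (Fin n →₀ ℕ) :=
  {m | m ∈ Border r s w δ ∧ IsDeltaMon δ m ∧ r + 1 ≤ mdeg m ∧ mdeg m ≤ s}

/-- The set `S_L` of "leading" monomials. -/
def SL {n : ℕ} (r w : ℕ) (δ : Fin n) : Set (Fin n →₀ ℕ) :=
  {m | IsDeltaMon δ m ∧ mdeg m = r ∧ r - w ≤ m δ}

/-- `tar = {m ∈ O : r ≤ deg m ≤ s}`. -/
def Tar {n : ℕ} (r s w : ℕ) (δ : Fin n) : Set (Fin n →₀ ℕ) :=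
  {m | m ∈ OIdeal r s w δ ∧ r ≤ mdeg m ∧ mdeg m ≤ s}

/-- `tar' = {m ∈ tar : deg m ≤ s−1}`. -/
def Tar' {n : ℕ} (r s w : ℕ) (δ : Fin n) : Set (Fin n →₀ ℕ) :=
  {m | m ∈ Tar r s w δ ∧ mdeg m ≤ s - 1}

/-- `tar'' = {m ∈ tar' : m_{δ+1} ≥ w}` (`δ'` is the index of `x_{δ+1}`). -/
def Tar'' {n : ℕ} (r s w : ℕ) (δ δ' : Fin n) : Set (Fin n →₀ ℕ) :=
  {m | m ∈ Tar' r s w δ ∧ w ≤ m δ'}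

/-- `trailmon = {m ∈ O : deg m = s}`. -/
def Trail {n : ℕ} (r s w : ℕ) (δ : Fin n) : Set (Fin n →₀ ℕ) :=
  {m | m ∈ OIdeal r s w δ ∧ mdeg m = s}

/-- `leadmon = {m : deg m = r, m ∉ O}`. -/
def Lead {n : ℕ} (r s w : ℕ) (δ : Fin n) : Set (Fin n →₀ ℕ) :=
  {m | mdeg m = r ∧ m ∉ OIdeal r s w δ}

/-- `Seg_a`: δ-monomials of degree `r` with `x_δ`-exponent `r − a`. -/
def SegA {n : ℕ} (r a : ℕ) (δ : Fin n) : Set (Fin n →₀ ℕ) :=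
  {b | IsDeltaMon δ b ∧ mdeg b = r ∧ b δ = r - a}

/-- The monomial `x_δ^{r−a}·x_{δ+1}^{a}` (`δ'` is the index of `x_{δ+1}`). -/
def bstar {n : ℕ} (r a : ℕ) (δ δ' : Fin n) : Fin n →₀ ℕ :=
  Finsupp.single δ (r - a) + Finsupp.single δ' a

/-- Truncation: sum of homogeneous components of degree `0` through `s`. -/
def truncLE {n : ℕ} {R : Type*} [CommRing R] (s : ℕ) (P : MvPolynomial (Fin n) R) :
    MvPolynomial (Fin n) R :=
  ∑ m ∈ P.support.filter (fun m => mdeg m ≤ s), monomial m (coeff m P)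

/-- `optX R none = 1 = X₀`, `optX R (some a) = X a`. -/
def optX {n : ℕ} (R : Type*) [CommRing R] : Option (Fin n) → MvPolynomial (Fin n) R
  | none => 1
  | some a => X a

/-- `optE none = 0 = e₀`, `optE (some a) = e_a`. -/
def optE {n : ℕ} : Option (Fin n) → (Fin n →₀ ℕ)
  | none => 0
  | some a => Finsupp.single a 1

/-- The reduction operator determined by a target function `UpsD` on `S_D`. -/
def redFn {n : ℕ} {R : Type*} [CommRing R] (r s w : ℕ) (δ : Fin n)
    (UpsD : (Fin n →₀ ℕ) → MvPolynomial (Fin n) R) (P : MvPolynomial (Fin n) R) :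
    MvPolynomial (Fin n) R :=
  (∑ m ∈ P.support.filter (fun m => m ∈ Tar r s w δ), monomial m (coeff m P)) -
  ∑ m ∈ P.support.filter (fun m => m ∈ SD r s w δ), coeff m P • UpsD m

/-- The polynomial ring over `K` in the distinguished indeterminates `C_{(t,b)}`
and the modification indeterminates `θ_m`. -/
abbrev BigA (K : Type*) [Field K] {n : ℕ} (r s w : ℕ) (δ δ' : Fin n) : Type _ :=
  MvPolynomial ((↥(Trail r s w δ) × ↥(Lead r s w δ)) ⊕ ↥(Tar'' r s w δ δ')) K

/-- The generic linear combination `N_b = Σ_t C_{(t,b)}·X^t` for `b ∈ leadmon`, `0` otherwise. -/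
def NB (K : Type*) [Field K] {n : ℕ} (r s w : ℕ) (δ δ' : Fin n) (b : Fin n →₀ ℕ) :
    MvPolynomial (Fin n) (BigA K r s w δ δ') :=
  if hb : b ∈ Lead r s w δ then
    ∑ᶠ t : ↥(Trail r s w δ),
      monomial (t : Fin n →₀ ℕ)
        (MvPolynomial.X (Sum.inl (t, ⟨b, hb⟩)) : BigA K r s w δ δ')
  else 0

/-! Take `Υ(b) = X^(b - (r-a)•e_δ) · P / x_{δ+1}^a`, which makes sense because `x_{δ+1}^a`
divides `P`. Compatibility is then an identity between the monomial factors. A monomial of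
`Υ(b)` arises from one of `P` by exchanging the factor `x_{δ+1}^a` for another δ-monomial of
degree `a` free of `x_δ` (here `a ≤ r` is needed); this changes neither the degree nor the
`x_δ`-exponent, and these are all that membership in `tar'` depends on. -/

namespace MvPolynomial

variable {σ R : Type*} [CommSemiring R]

theorem monomial_one_mul_divMonomial_of_le {p : MvPolynomial σ R} {s : σ →₀ ℕ}
    (h : ∀ m ∈ p.support, s ≤ m) : monomial s 1 * p.divMonomial s = p := by
  have hmod : p.modMonomial s = 0 := by
    ext m
    by_cases hsm : s ≤ m
    · rw [coeff_modMonomial_of_le _ hsm, coeff_zero]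
    · rw [coeff_modMonomial_of_not_le _ hsm, coeff_zero, ← notMem_support_iff]
      exact fun hm => hsm (h m hm)
  simpa [hmod] using divMonomial_add_modMonomial p s

theorem le_and_tsub_mem_support_of_mem_support_monomial_one_mul {p : MvPolynomial σ R}
    {s t : σ →₀ ℕ} (ht : t ∈ (monomial s 1 * p).support) : s ≤ t ∧ t - s ∈ p.support := by
  rw [mem_support_iff, coeff_monomial_mul'] at ht
  split_ifs at ht with hst
  · exact ⟨hst, mem_support_iff.mpr (by simpa using ht)⟩
  · exact absurd rfl ht

end MvPolynomial

section Monomials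

variable {n : ℕ}

theorem mdeg_eq_degree (m : Fin n →₀ ℕ) : mdeg m = m.degree :=
  (Finsupp.degree_eq_sum m).symm

theorem mdeg_add (x y : Fin n →₀ ℕ) : mdeg (x + y) = mdeg x + mdeg y := by
  simp only [mdeg_eq_degree, map_add]

theorem mdeg_single (α : Fin n) (c : ℕ) : mdeg (Finsupp.single α c) = c := by
  rw [mdeg_eq_degree, Finsupp.degree_single]

theorem mdeg_tsub {x y : Fin n →₀ ℕ} (h : y ≤ x) : mdeg (x - y) = mdeg x - mdeg y := by
  have := mdeg_add (x - y) y
  rw [tsub_add_cancel_of_le h] at this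
  omega

theorem mem_tar'_iff {r s w : ℕ} {δ : Fin n} {m : Fin n →₀ ℕ} :
    m ∈ Tar' r s w δ ↔
      IsDeltaMon δ m ∧ r ≤ mdeg m ∧ mdeg m ≤ s - 1 ∧ m δ + w + 1 ≤ r := by
  simp only [Tar', Tar, OIdeal, Set.mem_ofPred_eq]
  constructor
  · rintro ⟨⟨hO | hO, hr, -⟩, hs⟩
    · omega
    · exact ⟨hO.1, hr, hs, hO.2.2.2⟩
  · rintro ⟨hδ, hr, hs, hw⟩
    exact ⟨⟨Or.inr ⟨hδ, hr, by omega, hw⟩, hr, by omega⟩, hs⟩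

theorem add_mem_tar'_of_add_mem_tar' {r s w : ℕ} {δ : Fin n} {c d e : Fin n →₀ ℕ}
    (hed : e + d ∈ Tar' r s w δ) (hc : IsDeltaMon δ c) (hcδ : c δ = e δ)
    (hdeg : mdeg c = mdeg e) : c + d ∈ Tar' r s w δ := by
  rw [mem_tar'_iff] at hed ⊢
  obtain ⟨hmon, hr, hs, hw⟩ := hed
  have hmon' : IsDeltaMon δ (c + d) := fun k hk => by
    have := hmon k hk
    simp only [Finsupp.add_apply] at this ⊢
    rw [hc k hk]
    omega
  rw [mdeg_add] at hr hs ⊢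
  simp only [Finsupp.add_apply] at hw ⊢
  exact ⟨hmon', by omega, by omega, by omega⟩

theorem single_le_of_mem_segA {r a : ℕ} {δ : Fin n} {b : Fin n →₀ ℕ} (hb : b ∈ SegA r a δ) :
    Finsupp.single δ (r - a) ≤ b := by
  rw [Finsupp.single_le_iff, hb.2.2]

end Monomials

theorem statement18_general (R : Type*) [CommRing R] (n r s w : ℕ) (δ : Fin n)
    (hδ : (δ : ℕ) + 1 < n) (hw : w + 1 ≤ r)
    (a : ℕ) (ha : a ≤ w)
    (P : MvPolynomial (Fin n) R)
    (hP : (P.support : Set (Fin n →₀ ℕ)) ⊆ Tar' r s w δ)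
    (hP' : ∀ m ∈ P.support, a ≤ m ⟨(δ : ℕ) + 1, hδ⟩) :
    ∃ Ups : (Fin n →₀ ℕ) → MvPolynomial (Fin n) R,
      Ups (bstar r a δ ⟨(δ : ℕ) + 1, hδ⟩) = P ∧
      (∀ b ∈ SegA r a δ, ((Ups b).support : Set (Fin n →₀ ℕ)) ⊆ Tar' r s w δ) ∧
      (∀ b ∈ SegA r a δ, ∀ b' ∈ SegA r a δ, ∀ α β : Fin n, δ ≤ α → δ ≤ β →
        Finsupp.single α 1 + b = Finsupp.single β 1 + b' →
        X α * Ups b = X β * Ups b') := by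
  set δ' : Fin n := ⟨(δ : ℕ) + 1, hδ⟩
  set e := Finsupp.single δ' a
  set f := Finsupp.single δ (r - a)
  have heP : ∀ m ∈ P.support, e ≤ m := fun m hm => Finsupp.single_le_iff.mpr (hP' m hm)
  refine ⟨fun b => monomial (b - f) 1 * P.divMonomial e, ?_, ?_, ?_⟩
  · simpa [bstar, e, f] using monomial_one_mul_divMonomial_of_le heP
  · intro b hb t ht
    obtain ⟨hle, hmem⟩ := le_and_tsub_mem_support_of_mem_support_monomial_one_mul ht
    rw [mem_support_iff, coeff_divMonomial, ← mem_support_iff] at hmem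
    have hδδ' : δ ≠ δ' := Fin.ne_of_val_ne (Nat.ne_add_one _)
    have hfb := single_le_of_mem_segA hb
    rw [← add_tsub_cancel_of_le hle]
    refine add_mem_tar'_of_add_mem_tar' (hP hmem) (fun k hk => ?_) ?_ ?_
    · simp [f, hb.1 k hk]
    · simp [e, f, hb.2.2, Finsupp.single_eq_of_ne hδδ']
    · rw [mdeg_tsub hfb, hb.2.1, mdeg_single, mdeg_single]
      omega
  · intro b hb b' hb' α β _ _ heq
    have hshift : Finsupp.single α 1 + (b - f) = Finsupp.single β 1 + (b' - f) := by
      rw [← add_tsub_assoc_of_le (single_le_of_mem_segA hb),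
        ← add_tsub_assoc_of_le (single_le_of_mem_segA hb'), heq]
    simp only [← mul_assoc, X, monomial_mul, one_mul, hshift]

/-- existence of a compatible target assignment on an arbitrary segment
`Seg_a`, starting from an initial target divisible by `x_{δ+1}^a`. -/
theorem statement18 (R : Type*) [CommRing R] (n r s w : ℕ) (δ : Fin n)
    (hn : 2 ≤ n) (hr : 2 ≤ r) (hrs : r < s) (hδ : (δ : ℕ) + 1 < n) (hw : w + 1 ≤ r)
    (a : ℕ) (ha : a ≤ w)
    (P : MvPolynomial (Fin n) R)
    (hP : (P.support : Set (Fin n →₀ ℕ)) ⊆ Tar' r s w δ)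
    (hP' : ∀ m ∈ P.support, a ≤ m ⟨(δ : ℕ) + 1, hδ⟩) :
    ∃ Ups : (Fin n →₀ ℕ) → MvPolynomial (Fin n) R,
      Ups (bstar r a δ ⟨(δ : ℕ) + 1, hδ⟩) = P ∧
      (∀ b ∈ SegA r a δ, ((Ups b).support : Set (Fin n →₀ ℕ)) ⊆ Tar' r s w δ) ∧
      (∀ b ∈ SegA r a δ, ∀ b' ∈ SegA r a δ, ∀ α β : Fin n, δ ≤ α → δ ≤ β →
        Finsupp.single α 1 + b = Finsupp.single β 1 + b' →
        X α * Ups b = X β * Ups b') :=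
  statement18_general R n r s w δ hδ hw a ha P hP hP'
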